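/- Let S₂ = diag(C₁, C₂, C₃) be a block-diagonal unitary 3m × 3m matrix, S₃ a unitary 2m × 2m matrix, and let X, Y be m × m matrices such that S₂ N_Y = N_X S₃, where N_X has block rows [I,0],[I,I],[I,X] and N_Y has block rows [I,0],[I,I],[I,Y]. Then C₁ = C₂ = C₃, S₃ = diag(C₁, C₁), and C₃ Y = X C₃; in particular X and Y are unitarily similar. -/

import Mathlib

/-- The 3m × 2m block matrix with block rows [I 0], [I I], [I X]. -/
noncomputable def Nblk (m : ℕ) (X : Matrix (Fin m) (Fin m) ℂ) :
    Matrix (Fin 3 × Fin m) (Fin 2 × Fin m) ℂ :=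
  Matrix.of fun p q =>
    (![![(1 : Matrix (Fin m) (Fin m) ℂ), 0], ![1, 1], ![1, X]] p.1 q.1) p.2 q.2

/-- The block-diagonal matrix `diag(C₁, C₂, C₃)`. -/
noncomputable def bd3 {m : ℕ} (C : Fin 3 → Matrix (Fin m) (Fin m) ℂ) :
    Matrix (Fin 3 × Fin m) (Fin 3 × Fin m) ℂ :=
  Matrix.of fun p q => if p.1 = q.1 then C p.1 p.2 q.2 else 0

/-- The block-diagonal matrix `diag(C₁, C₂)`. -/
noncomputable def bd2 {m : ℕ} (C : Fin 2 → Matrix (Fin m) (Fin m) ℂ) :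
    Matrix (Fin 2 × Fin m) (Fin 2 × Fin m) ℂ :=
  Matrix.of fun p q => if p.1 = q.1 then C p.1 p.2 q.2 else 0


/-!
Read every matrix as a block matrix through `Matrix.comp`. The hypothesis becomes the block
identity `diag(C₁, C₂, C₃) * N_Y = N_X * S₃`, whose first block row says that the first block row
of `S₃` is `(C₁, 0)`. The first block column of the unitary `S₃` is an isometry whose top block `C₁`
is already an isometry, so the block below it vanishes; the remaining block equations then force
`C₁ = C₂ = C₃`, `S₃ = diag(C₁, C₁)` and `C₃ * Y = X * C₃`.
-/

namespace Matrix

variable {I J P K R : Type*}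

theorem comp_mul_comp [Fintype J] [Fintype K] [NonUnitalNonAssocSemiring R]
    (M : Matrix I J (Matrix K K R)) (N : Matrix J P (Matrix K K R)) :
    comp I J K K R M * comp J P K K R N = comp I P K K R (M * N) := by
  ext ⟨i, k⟩ ⟨p, l⟩
  simp only [comp_apply, mul_apply, sum_apply, Fintype.sum_prod_type]

theorem star_comp_mul_comp_eq_one_iff [Fintype I] [DecidableEq I] [Fintype K] [DecidableEq K]
    [Semiring R] [StarRing R] {M : Matrix I I (Matrix K K R)} :
    star (comp I I K K R M) * comp I I K K R M = 1 ↔ star M * M = 1 := by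
  rw [star_eq_conjTranspose, conjTranspose_comp', comp_mul_comp, ← comp_one,
    (comp I I K K R).apply_eq_iff_eq, star_eq_conjTranspose]

theorem star_diagonal_mul_diagonal_eq_one_iff [Fintype I] [DecidableEq I] [Semiring R]
    [StarRing R] {d : I → R} :
    star (diagonal d) * diagonal d = 1 ↔ ∀ i, star (d i) * d i = 1 := by
  rw [star_eq_conjTranspose, diagonal_conjTranspose, diagonal_mul_diagonal, ← diagonal_one,
    diagonal_injective.eq_iff, funext_iff]
  rfl

variable {K 𝕜 : Type*} [Fintype K] [DecidableEq K] [RCLike 𝕜]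

open scoped ComplexOrder in
theorem eq_zero_of_star_mul_self_add_star_mul_self_eq_one {A B : Matrix K K 𝕜}
    (h : star A * A + star B * B = 1) (hA : star A * A = 1) : B = 0 := by
  rw [hA, add_eq_left, star_eq_conjTranspose] at h
  exact conjTranspose_mul_self_eq_zero.mp h

theorem blocks_eq_of_diagonal_mul_eq_mul {C : Fin 3 → Matrix K K 𝕜} {X Y : Matrix K K 𝕜}
    {B : Matrix (Fin 2) (Fin 2) (Matrix K K 𝕜)} (hC : star (C 0) * C 0 = 1)
    (hB : star B * B = 1)
    (h : diagonal C * of ![![1, 0], ![1, 1], ![1, Y]] = of ![![1, 0], ![1, 1], ![1, X]] * B) :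
    C 0 = C 1 ∧ C 1 = C 2 ∧ B = diagonal ![C 0, C 0] ∧ C 2 * Y = X * C 2 := by
  have hblock (i j) := congrFun (congrFun h i) j
  have h00 : C 0 = B 0 0 := by simpa [mul_apply, Fin.sum_univ_succ] using hblock 0 0
  have h01 : 0 = B 0 1 := by simpa [mul_apply, Fin.sum_univ_succ] using hblock 0 1
  have h10 : C 1 = B 0 0 + B 1 0 := by simpa [mul_apply, Fin.sum_univ_succ] using hblock 1 0
  have h11 : C 1 = B 0 1 + B 1 1 := by simpa [mul_apply, Fin.sum_univ_succ] using hblock 1 1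
  have h20 : C 2 = B 0 0 + X * B 1 0 := by simpa [mul_apply, Fin.sum_univ_succ] using hblock 2 0
  have h21 : C 2 * Y = B 0 1 + X * B 1 1 := by
    simpa [mul_apply, Fin.sum_univ_succ] using hblock 2 1
  have hcol : star (B 0 0) * B 0 0 + star (B 1 0) * B 1 0 = 1 := by
    simpa [mul_apply, Fin.sum_univ_succ] using congrFun (congrFun hB 0) 0
  have hB10 : B 1 0 = 0 := eq_zero_of_star_mul_self_add_star_mul_self_eq_one hcol (h00 ▸ hC)
  have hC01 : C 0 = C 1 := by rw [h10, hB10, add_zero, h00]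
  have hB11 : B 1 1 = C 0 := by rw [hC01, h11, ← h01, zero_add]
  have hC12 : C 1 = C 2 := by rw [h20, hB10, mul_zero, add_zero, ← hC01, h00]
  refine ⟨hC01, hC12, ?_, ?_⟩
  · ext1 i j
    fin_cases i <;> fin_cases j <;> simp [← h00, ← h01, hB10, hB11]
  · rw [h21, ← h01, zero_add, hB11, hC01, hC12]

end Matrix

open Matrix

theorem bd3_eq_comp {m : ℕ} (C : Fin 3 → Matrix (Fin m) (Fin m) ℂ) :
    bd3 C = comp _ _ _ _ _ (diagonal C) := by
  ext ⟨i, a⟩ ⟨j, b⟩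
  by_cases hij : i = j <;> simp [bd3, hij]

theorem bd2_eq_comp {m : ℕ} (C : Fin 2 → Matrix (Fin m) (Fin m) ℂ) :
    bd2 C = comp _ _ _ _ _ (diagonal C) := by
  ext ⟨i, a⟩ ⟨j, b⟩
  by_cases hij : i = j <;> simp [bd2, hij]

theorem Nblk_eq_comp (m : ℕ) (X : Matrix (Fin m) (Fin m) ℂ) :
    Nblk m X = comp _ _ _ _ _ (of ![![1, 0], ![1, 1], ![1, X]]) :=
  rfl

theorem stmt_16 {m : ℕ} (C₁ C₂ C₃ X Y : Matrix (Fin m) (Fin m) ℂ)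
    (S₃ : Matrix (Fin 2 × Fin m) (Fin 2 × Fin m) ℂ)
    (hS₂ : bd3 ![C₁, C₂, C₃] ∈ Matrix.unitaryGroup (Fin 3 × Fin m) ℂ)
    (hS₃ : S₃ ∈ Matrix.unitaryGroup (Fin 2 × Fin m) ℂ)
    (h : bd3 ![C₁, C₂, C₃] * Nblk m Y = Nblk m X * S₃) :
    C₁ = C₂ ∧ C₂ = C₃ ∧ S₃ = bd2 ![C₁, C₁] ∧ C₃ * Y = X * C₃ ∧
    ∃ C ∈ Matrix.unitaryGroup (Fin m) ℂ, C⁻¹ * X * C = Y := by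
  obtain ⟨B, rfl⟩ := (comp (Fin 2) (Fin 2) (Fin m) (Fin m) ℂ).surjective S₃
  rw [mem_unitaryGroup_iff', star_comp_mul_comp_eq_one_iff] at hS₃
  rw [bd3_eq_comp, mem_unitaryGroup_iff', star_comp_mul_comp_eq_one_iff,
    star_diagonal_mul_diagonal_eq_one_iff] at hS₂
  rw [bd3_eq_comp, Nblk_eq_comp, Nblk_eq_comp, comp_mul_comp, comp_mul_comp,
    (comp _ _ _ _ _).apply_eq_iff_eq] at h
  obtain ⟨h₁₂, h₂₃, rfl, hXY⟩ : C₁ = C₂ ∧ C₂ = C₃ ∧ B = diagonal ![C₁, C₁] ∧ C₃ * Y = X * C₃ :=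
    blocks_eq_of_diagonal_mul_eq_mul (hS₂ 0) hS₃ h
  have hC₃ : star C₃ * C₃ = 1 := hS₂ 2
  refine ⟨h₁₂, h₂₃, (bd2_eq_comp _).symm, hXY, C₃, mem_unitaryGroup_iff'.mpr hC₃, ?_⟩
  rw [inv_eq_left_inv hC₃, mul_assoc, ← hXY, ← mul_assoc, hC₃, one_mul]
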